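/- arXiv:1512.05087 — 7 statements merged into one kernel-verified Lean document; each statement's English description precedes it below -/
import Mathlib

section
/- A proximal dynamical system contains exactly one minimal subsystem. -/
open Topology Filter Set

/-!
Zorn's lemma, with compactness making the intersection of a chain of subsystems nonempty, gives a
minimal subsystem. If `M` and `N` are minimal subsystems containing `x` and `y`, proximality of
`x` and `y` yields a common limit point `z` of `gₙ • x ∈ M` and `gₙ • y ∈ N`; so `M ∩ N` is a
subsystem and minimality forces `M = M ∩ N = N`.
-/

section

variable (G : Type*) {X : Type*} [SMul G X] [TopologicalSpace X]

def IsSubsystem (M : Set X) : Prop :=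
  M.Nonempty ∧ IsClosed M ∧ ∀ g : G, ∀ x ∈ M, g • x ∈ M

variable {G}

theorem IsSubsystem.inter {M N : Set X} (hM : IsSubsystem G M) (hN : IsSubsystem G N)
    (hMN : (M ∩ N).Nonempty) : IsSubsystem G (M ∩ N) :=
  ⟨hMN, hM.2.1.inter hN.2.1, fun g _ hx => ⟨hM.2.2 g _ hx.1, hN.2.2 g _ hx.2⟩⟩

theorem IsSubsystem.sInter_of_isChain [CompactSpace X] {c : Set (Set X)}
    (hc : ∀ M ∈ c, IsSubsystem G M) (hchain : IsChain (· ⊆ ·) c) (hne : c.Nonempty) :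
    IsSubsystem G (⋂₀ c) := by
  have : Nonempty c := hne.to_subtype
  have : Std.Refl (flip (· ⊆ ·) : Set X → Set X → Prop) := ⟨fun _ => subset_rfl⟩
  refine ⟨?_, isClosed_sInter fun M hM => (hc M hM).2.1,
    fun g x hx M hM => (hc M hM).2.2 g x (hx M hM)⟩
  exact IsCompact.nonempty_sInter_of_directed_nonempty_isCompact_isClosed hchain.symm.directedOn
    (fun M hM => (hc M hM).1) (fun M hM => (hc M hM).2.1.isCompact) (fun M hM => (hc M hM).2.1)

variable (G X) in
theorem exists_minimal_isSubsystem [CompactSpace X] [Nonempty X] :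
    ∃ M : Set X, Minimal (IsSubsystem G) M := by
  obtain ⟨M, -, hM⟩ := zorn_superset_nonempty {M : Set X | IsSubsystem G M}
    (fun c hc hchain hne => ⟨⋂₀ c, .sInter_of_isChain hc hchain hne, fun _ => sInter_subset_of_mem⟩)
    univ ⟨univ_nonempty, isClosed_univ, fun _ _ _ => mem_univ _⟩
  exact ⟨M, hM⟩

theorem IsSubsystem.mem_of_tendsto {M : Set X} (hM : IsSubsystem G M) {x z : X} (hx : x ∈ M)
    {gs : ℕ → G} (hz : Tendsto (fun n => gs n • x) atTop (𝓝 z)) : z ∈ M :=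
  hM.2.1.mem_of_tendsto hz (.of_forall fun n => hM.2.2 (gs n) x hx)

theorem Minimal.eq_of_inter_nonempty {M N : Set X} (hM : Minimal (IsSubsystem G) M)
    (hN : Minimal (IsSubsystem G) N) (hMN : (M ∩ N).Nonempty) : M = N := by
  have hinter := hM.prop.inter hN.prop hMN
  rw [← hM.eq_of_subset hinter inter_subset_left, hN.eq_of_subset hinter inter_subset_right]

theorem minimal_isSubsystem_iff {M : Set X} :
    Minimal (IsSubsystem G) M ↔ M.Nonempty ∧ IsClosed M ∧ (∀ (g : G), ∀ x ∈ M, g • x ∈ M) ∧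
      ∀ N ⊆ M, N.Nonempty → IsClosed N → (∀ (g : G), ∀ x ∈ N, g • x ∈ N) → N = M := by
  rw [minimal_iff]
  exact ⟨fun ⟨⟨hne, hcl, hinv⟩, h⟩ => ⟨hne, hcl, hinv, fun N hNM hN hNc hNi =>
      (h ⟨hN, hNc, hNi⟩ hNM).symm⟩,
    fun ⟨hne, hcl, hinv, h⟩ => ⟨⟨hne, hcl, hinv⟩, fun N hN hNM => (h N hNM hN.1 hN.2.1 hN.2.2).symm⟩⟩

end

theorem proximal_unique_minimal_subsystem_general
    {G X : Type*} [Group G]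
    [MetricSpace X] [CompactSpace X] [Nonempty X] [MulAction G X]
    (hprox : ∀ x y : X, ∃ z : X, ∃ gs : ℕ → G,
      Tendsto (fun n => gs n • x) atTop (𝓝 z) ∧ Tendsto (fun n => gs n • y) atTop (𝓝 z)) :
    ∃! M : Set X, M.Nonempty ∧ IsClosed M ∧ (∀ (g : G), ∀ x ∈ M, g • x ∈ M) ∧
      (∀ N ⊆ M, N.Nonempty → IsClosed N → (∀ (g : G), ∀ x ∈ N, g • x ∈ N) → N = M) := by
  simp_rw [← minimal_isSubsystem_iff]
  obtain ⟨M, hM⟩ := exists_minimal_isSubsystem G X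
  refine ⟨M, hM, fun N hN => ?_⟩
  obtain ⟨x, hx⟩ := hM.prop.1
  obtain ⟨y, hy⟩ := hN.prop.1
  obtain ⟨z, gs, hxz, hyz⟩ := hprox x y
  exact hN.eq_of_inter_nonempty hM ⟨z, hN.prop.mem_of_tendsto hy hyz, hM.prop.mem_of_tendsto hx hxz⟩

/-- A proximal dynamical system contains exactly one minimal subsystem. -/
theorem proximal_unique_minimal_subsystem
    {G X : Type*} [Group G] [TopologicalSpace G] [IsTopologicalGroup G]
    [MetricSpace X] [CompactSpace X] [Nonempty X] [MulAction G X] [ContinuousSMul G X]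
    (hprox : ∀ x y : X, ∃ z : X, ∃ gs : ℕ → G,
      Tendsto (fun n => gs n • x) atTop (𝓝 z) ∧ Tendsto (fun n => gs n • y) atTop (𝓝 z)) :
    ∃! M : Set X, M.Nonempty ∧ IsClosed M ∧ (∀ (g : G), ∀ x ∈ M, g • x ∈ M) ∧
      (∀ N ⊆ M, N.Nonempty → IsClosed N → (∀ (g : G), ∀ x ∈ N, g • x ∈ N) → N = M) :=
  proximal_unique_minimal_subsystem_general hprox
end

section
/- A minimal proximal dynamical system admits no endomorphisms other than the identity. -/
open Topology Filter Set

section Equivariant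

variable {G X : Type*} [SMul G X] [TopologicalSpace X] [T2Space X] {φ : X → X}

theorem apply_eq_self_of_tendsto_smul {ι : Type*} {l : Filter ι} [l.NeBot] {gs : ι → G}
    {x z : X} (hφcont : Continuous φ) (hφequiv : ∀ (g : G) (x : X), φ (g • x) = g • φ x)
    (hx : Tendsto (fun n => gs n • x) l (𝓝 z)) (hφx : Tendsto (fun n => gs n • φ x) l (𝓝 z)) :
    φ z = z := by
  have hφz : Tendsto (fun n => gs n • φ x) l (𝓝 (φ z)) := by
    simpa only [Function.comp_def, hφequiv] using (hφcont.tendsto z).comp hx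
  exact tendsto_nhds_unique hφz hφx

theorem eq_id_of_apply_eq_self_of_dense_orbit {z : X} (hφcont : Continuous φ)
    (hφequiv : ∀ (g : G) (x : X), φ (g • x) = g • φ x)
    (hdense : Dense (range fun g : G => g • z)) (hz : φ z = z) : φ = id := by
  refine hφcont.ext_on hdense continuous_id ?_
  rintro _ ⟨g, rfl⟩
  simp only [hφequiv, hz, id]

end Equivariant

theorem minimal_proximal_no_endomorphisms_general
    {G X : Type*} [Group G]
    [MetricSpace X] [MulAction G X]
    (hmin : ∀ x : X, Dense (Set.range fun g : G => g • x))
    (hprox : ∀ x y : X, ∃ z : X, ∃ gs : ℕ → G,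
      Tendsto (fun n => gs n • x) atTop (𝓝 z) ∧ Tendsto (fun n => gs n • y) atTop (𝓝 z))
    (φ : X → X) (hφcont : Continuous φ) (hφequiv : ∀ (g : G) (x : X), φ (g • x) = g • φ x) :
    φ = id := by
  funext x
  obtain ⟨z, gs, hx, hφx⟩ := hprox x (φ x)
  have hz : φ z = z := apply_eq_self_of_tendsto_smul hφcont hφequiv hx hφx
  exact congrFun (eq_id_of_apply_eq_self_of_dense_orbit hφcont hφequiv (hmin z) hz) x

/-- A minimal proximal dynamical system admits no endomorphisms other than the identity. -/
theorem minimal_proximal_no_endomorphisms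
    {G X : Type*} [Group G] [TopologicalSpace G] [IsTopologicalGroup G]
    [MetricSpace X] [CompactSpace X] [Nonempty X] [MulAction G X] [ContinuousSMul G X]
    (hmin : ∀ x : X, Dense (Set.range fun g : G => g • x))
    (hprox : ∀ x y : X, ∃ z : X, ∃ gs : ℕ → G,
      Tendsto (fun n => gs n • x) atTop (𝓝 z) ∧ Tendsto (fun n => gs n • y) atTop (𝓝 z))
    (φ : X → X) (hφcont : Continuous φ) (hφequiv : ∀ (g : G) (x : X), φ (g • x) = g • φ x) :
    φ = id :=
  minimal_proximal_no_endomorphisms_general hmin hprox φ hφcont hφequiv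
end

section
/- A dynamical system (X,G) is strongly proximal if and only if the induced system on the space M(X) of Borel probability measures (with the weak* topology) is proximal. In particular, every strongly proximal system is proximal. -/
/-!
Strong proximality applied to the average `(μ + ν)/2` yields `gₙ(μ + ν)/2 → δ_x`; since `δ_x` is
an extreme point of `M(X)`, then `gₙμ → δ_x` and `gₙν → δ_x`, so `M(X)` is proximal, and with
`μ = δ_p`, `ν = δ_q` the system `X` itself is proximal because `x ↦ δ_x` is an embedding.
Conversely, pairing `μ` with a point mass `δ_{x₀}` gives a common limit of `gₙμ` and of the
point masses `δ_{gₙx₀}`, which is again a point mass since these form a closed subset of `M(X)`.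
-/

open MeasureTheory Filter Topology Set

/-- The point mass `δ_x` as a probability measure. -/
noncomputable def diracPM {X : Type*} [MeasurableSpace X] (x : X) : ProbabilityMeasure X :=
  ⟨MeasureTheory.Measure.dirac x, inferInstance⟩

/-- The induced action of `g` on the space of probability measures. -/
noncomputable def smulPM {G X : Type*} [Group G] [TopologicalSpace X] [MeasurableSpace X]
    [BorelSpace X] [MulAction G X] [ContinuousConstSMul G X]
    (g : G) (μ : ProbabilityMeasure X) : ProbabilityMeasure X :=
  μ.map (f := fun x => g • x) (continuous_const_smul g).measurable.aemeasurable

open scoped ENNReal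

noncomputable def avgPM {X : Type*} [MeasurableSpace X] (μ ν : ProbabilityMeasure X) :
    ProbabilityMeasure X :=
  ⟨(2 : ℝ≥0∞)⁻¹ • μ.toMeasure + (2 : ℝ≥0∞)⁻¹ • ν.toMeasure,
    ⟨by simp [ENNReal.inv_two_add_inv_two]⟩⟩

section Measures

variable {X : Type*} [MeasurableSpace X]

lemma toMeasure_avgPM (μ ν : ProbabilityMeasure X) :
    (avgPM μ ν).toMeasure = (2 : ℝ≥0∞)⁻¹ • μ.toMeasure + (2 : ℝ≥0∞)⁻¹ • ν.toMeasure :=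
  rfl

lemma avgPM_comm (μ ν : ProbabilityMeasure X) : avgPM μ ν = avgPM ν μ :=
  Subtype.ext (add_comm _ _)

lemma measure_le_two_mul_avgPM (μ ν : ProbabilityMeasure X) (s : Set X) :
    μ.toMeasure s ≤ 2 * (avgPM μ ν).toMeasure s := by
  calc μ.toMeasure s = 2 * ((2 : ℝ≥0∞)⁻¹ * μ.toMeasure s) := by
        rw [← mul_assoc, ENNReal.mul_inv_cancel two_ne_zero ENNReal.ofNat_ne_top, one_mul]
    _ ≤ 2 * (avgPM μ ν).toMeasure s := by
        gcongr
        simp only [toMeasure_avgPM, Measure.add_apply, Measure.smul_apply, smul_eq_mul]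
        exact le_self_add

variable [TopologicalSpace X] [OpensMeasurableSpace X] [HasOuterApproxClosed X]
  {ι : Type*} {L : Filter ι} [L.IsCountablyGenerated]

/-- Sequential form of the extremality of point masses in `M(X)`. -/
lemma tendsto_left_of_tendsto_avgPM_diracPM {μs νs : ι → ProbabilityMeasure X} {x : X}
    (h : Tendsto (fun i => avgPM (μs i) (νs i)) L (𝓝 (diracPM x))) :
    Tendsto μs L (𝓝 (diracPM x)) := by
  refine tendsto_of_forall_isClosed_limsup_le' fun F hF => ?_
  by_cases hx : x ∈ F
  · exact limsup_le_of_le (by isBoundedDefault) (Eventually.of_forall fun _ => prob_le_one)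
      |>.trans_eq (Measure.dirac_apply_of_mem hx).symm
  · have hδ : (diracPM x).toMeasure F = 0 := by
      simp [diracPM, Measure.dirac_apply' x hF.measurableSet, hx]
    have havg := ProbabilityMeasure.limsup_measure_closed_le_of_tendsto h hF
    rw [hδ, nonpos_iff_eq_zero] at havg
    calc L.limsup (fun i => (μs i).toMeasure F)
        ≤ L.limsup (fun i => 2 * (avgPM (μs i) (νs i)).toMeasure F) :=
          limsup_le_limsup (Eventually.of_forall fun i => measure_le_two_mul_avgPM _ _ F)
      _ = 0 := by rw [ENNReal.limsup_const_mul_of_ne_top ENNReal.ofNat_ne_top, havg, mul_zero]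
      _ = (diracPM x).toMeasure F := hδ.symm

lemma tendsto_right_of_tendsto_avgPM_diracPM {μs νs : ι → ProbabilityMeasure X} {x : X}
    (h : Tendsto (fun i => avgPM (μs i) (νs i)) L (𝓝 (diracPM x))) :
    Tendsto νs L (𝓝 (diracPM x)) :=
  tendsto_left_of_tendsto_avgPM_diracPM (νs := μs) (by simpa only [avgPM_comm] using h)

end Measures

section Dirac

variable {X : Type*} [TopologicalSpace X] [MeasurableSpace X] {ι : Type*} {L : Filter ι}

lemma tendsto_diracPM_iff [OpensMeasurableSpace X] [T0Space X] [CompletelyRegularSpace X]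
    {ys : ι → X} {x : X} :
    Tendsto (fun i => diracPM (ys i)) L (𝓝 (diracPM x)) ↔ Tendsto ys L (𝓝 x) :=
  isEmbedding_diracProba.tendsto_nhds_iff.symm

lemma exists_eq_diracPM_of_tendsto [CompactSpace X] [BorelSpace X] [HasOuterApproxClosed X]
    [L.NeBot] {ys : ι → X} {lam : ProbabilityMeasure X}
    (h : Tendsto (fun i => diracPM (ys i)) L (𝓝 lam)) : ∃ z, lam = diracPM z :=
  (isCompact_range continuous_diracProba).isClosed.mem_of_tendsto h
    (Eventually.of_forall fun i => mem_range_self (ys i)) |>.imp fun _ hz => hz.symm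

end Dirac

section Action

variable {G X : Type*} [Group G] [TopologicalSpace X] [MeasurableSpace X] [BorelSpace X]
  [MulAction G X] [ContinuousConstSMul G X]

lemma smulPM_avgPM (g : G) (μ ν : ProbabilityMeasure X) :
    smulPM g (avgPM μ ν) = avgPM (smulPM g μ) (smulPM g ν) := by
  apply Subtype.ext
  have hg : Measurable (fun x : X => g • x) := (continuous_const_smul g).measurable
  change Measure.map _ (avgPM μ ν).toMeasure = _
  rw [toMeasure_avgPM, Measure.map_add _ _ hg, Measure.map_smul, Measure.map_smul]
  rfl

lemma smulPM_diracPM (g : G) (x : X) : smulPM g (diracPM x) = diracPM (g • x) :=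
  Subtype.ext (Measure.map_dirac' (continuous_const_smul g).measurable x)

end Action

def IsStronglyProximal (G X : Type*) [Group G] [TopologicalSpace X] [MeasurableSpace X]
    [BorelSpace X] [MulAction G X] [ContinuousConstSMul G X] : Prop :=
  ∀ μ : ProbabilityMeasure X, ∃ gs : ℕ → G, ∃ x : X,
    Tendsto (fun n => smulPM (gs n) μ) atTop (𝓝 (diracPM x))

lemma IsStronglyProximal.exists_tendsto_diracPM_pair {G X : Type*} [Group G]
    [TopologicalSpace X] [MeasurableSpace X] [BorelSpace X] [HasOuterApproxClosed X]
    [MulAction G X] [ContinuousConstSMul G X] (hSP : IsStronglyProximal G X)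
    (μ ν : ProbabilityMeasure X) :
    ∃ gs : ℕ → G, ∃ x : X, Tendsto (fun n => smulPM (gs n) μ) atTop (𝓝 (diracPM x)) ∧
      Tendsto (fun n => smulPM (gs n) ν) atTop (𝓝 (diracPM x)) := by
  obtain ⟨gs, x, h⟩ := hSP (avgPM μ ν)
  simp only [smulPM_avgPM] at h
  exact ⟨gs, x, tendsto_left_of_tendsto_avgPM_diracPM h,
    tendsto_right_of_tendsto_avgPM_diracPM h⟩

theorem stronglyProximal_iff_measures_proximal_general
    {G X : Type*} [Group G] [TopologicalSpace G]
    [MetricSpace X] [CompactSpace X] [Nonempty X] [MeasurableSpace X] [BorelSpace X]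
    [MulAction G X] [ContinuousSMul G X] :
    ((∀ μ : ProbabilityMeasure X, ∃ gs : ℕ → G, ∃ x : X,
        Tendsto (fun n => smulPM (gs n) μ) atTop (𝓝 (diracPM x))) ↔
      (∀ μ ν : ProbabilityMeasure X, ∃ lam : ProbabilityMeasure X, ∃ gs : ℕ → G,
        Tendsto (fun n => smulPM (gs n) μ) atTop (𝓝 lam) ∧
        Tendsto (fun n => smulPM (gs n) ν) atTop (𝓝 lam))) ∧
    ((∀ μ : ProbabilityMeasure X, ∃ gs : ℕ → G, ∃ x : X,
        Tendsto (fun n => smulPM (gs n) μ) atTop (𝓝 (diracPM x))) →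
      (∀ p q : X, ∃ z : X, ∃ gs : ℕ → G,
        Tendsto (fun n => gs n • p) atTop (𝓝 z) ∧
        Tendsto (fun n => gs n • q) atTop (𝓝 z))) := by
  refine ⟨⟨fun hSP μ ν => ?_, fun hP μ => ?_⟩, fun hSP p q => ?_⟩
  · obtain ⟨gs, x, hμ, hν⟩ := IsStronglyProximal.exists_tendsto_diracPM_pair hSP μ ν
    exact ⟨diracPM x, gs, hμ, hν⟩
  · obtain ⟨x₀⟩ := ‹Nonempty X›
    obtain ⟨lam, gs, hμ, hδ⟩ := hP μ (diracPM x₀)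
    simp only [smulPM_diracPM] at hδ
    obtain ⟨z, rfl⟩ := exists_eq_diracPM_of_tendsto hδ
    exact ⟨gs, z, hμ⟩
  · obtain ⟨gs, z, hp, hq⟩ :=
      IsStronglyProximal.exists_tendsto_diracPM_pair hSP (diracPM p) (diracPM q)
    simp only [smulPM_diracPM, tendsto_diracPM_iff] at hp hq
    exact ⟨z, gs, hp, hq⟩

/-- `(X,G)` is strongly proximal iff `(M(X),G)` is proximal; in particular a strongly
proximal system is proximal. -/
theorem stronglyProximal_iff_measures_proximal
    {G X : Type*} [Group G] [TopologicalSpace G] [IsTopologicalGroup G]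
    [MetricSpace X] [CompactSpace X] [Nonempty X] [MeasurableSpace X] [BorelSpace X]
    [MulAction G X] [ContinuousSMul G X] :
    ((∀ μ : ProbabilityMeasure X, ∃ gs : ℕ → G, ∃ x : X,
        Tendsto (fun n => smulPM (gs n) μ) atTop (𝓝 (diracPM x))) ↔
      (∀ μ ν : ProbabilityMeasure X, ∃ lam : ProbabilityMeasure X, ∃ gs : ℕ → G,
        Tendsto (fun n => smulPM (gs n) μ) atTop (𝓝 lam) ∧
        Tendsto (fun n => smulPM (gs n) ν) atTop (𝓝 lam))) ∧
    ((∀ μ : ProbabilityMeasure X, ∃ gs : ℕ → G, ∃ x : X,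
        Tendsto (fun n => smulPM (gs n) μ) atTop (𝓝 (diracPM x))) →
      (∀ p q : X, ∃ z : X, ∃ gs : ℕ → G,
        Tendsto (fun n => gs n • p) atTop (𝓝 z) ∧
        Tendsto (fun n => gs n • q) atTop (𝓝 z))) :=
  stronglyProximal_iff_measures_proximal_general
end

section
/- If (Q,G) is an irreducible affine dynamical system and A ⊆ Q is any nonempty closed G-invariant subset, then A contains all extreme points of Q. -/
/-!
The closed convex hull of `A` is a nonempty closed convex invariant subset of `Q`, so by
irreducibility it is `Q`. Milman's converse of the Krein–Milman theorem then puts every extreme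
point of `Q` into `A`: cover the compact set `A` by finitely many translates `a + U` of a small
closed convex neighbourhood of `0`; the closed convex hulls `K a` of the pieces `A ∩ (a + U)` are
compact, so their convex hull is compact and equals `Q`. An extreme point of that hull lies in
some `K a ⊆ a + U`, hence arbitrarily close to `A`.
-/

open Topology Set Pointwise

section TopologicalVectorSpace

variable {E : Type*} [AddCommGroup E] [Module ℝ E] [TopologicalSpace E]
  [IsTopologicalAddGroup E] [ContinuousSMul ℝ E]

theorem IsCompact.convexJoin {s t : Set E} (hs : IsCompact s) (ht : IsCompact t) :
    IsCompact (_root_.convexJoin ℝ s t) := by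
  have himage : _root_.convexJoin ℝ s t =
      (fun p : ℝ × E × E => (1 - p.1) • p.2.1 + p.1 • p.2.2) ''
        (Icc 0 1 ×ˢ s ×ˢ t) := by
    ext x
    simp only [mem_convexJoin, segment_eq_image, mem_image, mem_prod, Prod.exists]
    constructor
    · rintro ⟨a, ha, b, hb, θ, hθ, rfl⟩
      exact ⟨θ, a, b, ⟨hθ, ha, hb⟩, rfl⟩
    · rintro ⟨θ, a, b, ⟨hθ, ha, hb⟩, rfl⟩
      exact ⟨a, ha, b, hb, θ, hθ, rfl⟩
  rw [himage]
  exact (isCompact_Icc.prod (hs.prod ht)).image (by fun_prop)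

theorem isCompact_convexHull_union {s t : Set E} (hs : IsCompact (convexHull ℝ s))
    (ht : IsCompact (convexHull ℝ t)) : IsCompact (convexHull ℝ (s ∪ t)) := by
  rcases s.eq_empty_or_nonempty with rfl | hs₀
  · simpa using ht
  rcases t.eq_empty_or_nonempty with rfl | ht₀
  · simpa using hs
  rw [convexHull_union hs₀ ht₀]
  exact hs.convexJoin ht

theorem Finset.isCompact_convexHull_biUnion {ι : Type*} (t : Finset ι) {K : ι → Set E}
    (hK : ∀ i ∈ t, IsCompact (convexHull ℝ (K i))) :
    IsCompact (convexHull ℝ (⋃ i ∈ t, K i)) := by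
  classical
  induction t using Finset.induction_on with
  | empty => simp
  | insert a t _ ih =>
    rw [Finset.set_biUnion_insert]
    exact isCompact_convexHull_union (hK a (Finset.mem_insert_self a t))
      (ih fun i hi => hK i (Finset.mem_insert_of_mem hi))

theorem exists_isClosed_convex_nhds_zero_subset [LocallyConvexSpace ℝ E] {W : Set E}
    (hW : W ∈ 𝓝 (0 : E)) :
    ∃ U ∈ 𝓝 (0 : E), IsClosed U ∧ Convex ℝ U ∧ U ⊆ W := by
  obtain ⟨W', hW', hW'closed, hW'W⟩ := exists_mem_nhds_isClosed_subset hW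
  obtain ⟨S, ⟨hS, hSconv⟩, hSW'⟩ :=
    (LocallyConvexSpace.convex_basis_zero ℝ E).mem_iff.1 hW'
  exact ⟨closure S, Filter.mem_of_superset hS subset_closure, isClosed_closure,
    hSconv.closure, (closure_minimal hSW' hW'closed).trans hW'W⟩

theorem extremePoints_subset_add_of_closure_convexHull_eq [T2Space E] {A Q U : Set E}
    (hQ : IsCompact Q) (hA : IsClosed A) (hAQ : closure (convexHull ℝ A) = Q)
    (hU : U ∈ 𝓝 (0 : E)) (hUclosed : IsClosed U) (hUconv : Convex ℝ U) :
    Q.extremePoints ℝ ⊆ A + U := by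
  have hAcomp : IsCompact A := hQ.of_isClosed_subset hA (hAQ ▸ subset_closure.trans
    (closure_mono (subset_convexHull ℝ A)))
  obtain ⟨t, htA, hAt⟩ := hAcomp.elim_nhds_subcover (fun a => a +ᵥ U)
    fun a _ => by simpa using vadd_mem_nhds_vadd a hU
  set K : E → Set E := fun a => closure (convexHull ℝ (A ∩ (a +ᵥ U)))
  have hKQ : ∀ a, K a ⊆ Q := fun a => hAQ ▸ closure_mono (convexHull_mono inter_subset_left)
  have hKU : ∀ a, K a ⊆ a +ᵥ U := fun a =>
    closure_minimal (convexHull_min inter_subset_right (hUconv.vadd a)) (hUclosed.vadd a)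
  have hKcomp : ∀ a ∈ t, IsCompact (convexHull ℝ (K a)) := fun a _ => by
    rw [(convex_convexHull ℝ _).closure.convexHull_eq]
    exact hQ.of_isClosed_subset isClosed_closure (hKQ a)
  have hQK : Q = convexHull ℝ (⋃ a ∈ t, K a) := by
    refine (hAQ ▸ closure_minimal (convexHull_mono fun y hy => ?_)
      (t.isCompact_convexHull_biUnion hKcomp).isClosed).antisymm
      (convexHull_min (iUnion₂_subset fun a _ => hKQ a)
        (hAQ ▸ (convex_convexHull ℝ A).closure))
    obtain ⟨a, ha, hya⟩ := mem_iUnion₂.1 (hAt hy)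
    exact mem_iUnion₂.2 ⟨a, ha, subset_closure (subset_convexHull ℝ _ ⟨hy, hya⟩)⟩
  intro x hx
  rw [hQK] at hx
  obtain ⟨a, ha, hxa⟩ := mem_iUnion₂.1 (extremePoints_convexHull_subset hx)
  obtain ⟨u, hu, rfl⟩ := mem_vadd_set.1 (hKU a hxa)
  exact mem_add.2 ⟨a, htA a ha, u, hu, rfl⟩

/-- Milman's converse of the Krein–Milman theorem. -/
theorem extremePoints_subset_of_closure_convexHull_eq [LocallyConvexSpace ℝ E] [T2Space E]
    {A Q : Set E} (hQ : IsCompact Q) (hA : IsClosed A) (hAQ : closure (convexHull ℝ A) = Q) :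
    Q.extremePoints ℝ ⊆ A := by
  intro x hx
  by_contra hxA
  have hW : (x - ·) ⁻¹' Aᶜ ∈ 𝓝 (0 : E) :=
    (continuous_sub_left x).continuousAt.preimage_mem_nhds
      (by simpa using hA.isOpen_compl.mem_nhds hxA)
  obtain ⟨U, hU, hUclosed, hUconv, hUW⟩ := exists_isClosed_convex_nhds_zero_subset hW
  obtain ⟨a, ha, u, hu, rfl⟩ :=
    mem_add.1 (extremePoints_subset_add_of_closure_convexHull_eq hQ hA hAQ hU hUclosed hUconv hx)
  exact hUW hu (by simpa using ha)

end TopologicalVectorSpace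

theorem AffineMap.image_closure_convexHull_subset {E F : Type*} [AddCommGroup E] [Module ℝ E]
    [TopologicalSpace E] [AddCommGroup F] [Module ℝ F] [TopologicalSpace F] (f : E →ᵃ[ℝ] F)
    (hf : Continuous f) {A : Set E} {B : Set F} (hAB : f '' A ⊆ B) :
    f '' closure (convexHull ℝ A) ⊆ closure (convexHull ℝ B) :=
  (image_closure_subset_closure_image hf).trans
    (closure_mono ((f.image_convexHull A).trans_subset (convexHull_mono hAB)))

theorem closed_invariant_subset_contains_extremePoints_general
    {G V : Type*} [Group G] [AddCommGroup V] [Module ℝ V] [TopologicalSpace V]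
    [IsTopologicalAddGroup V] [ContinuousSMul ℝ V] [LocallyConvexSpace ℝ V]
    [TopologicalSpace.MetrizableSpace V]
    (Q : Set V) (hQcomp : IsCompact Q) (hQconv : Convex ℝ Q)
    (σ : G → V →ᵃ[ℝ] V) (hσcont : ∀ g : G, Continuous (σ g))
    (hirr : ∀ B ⊆ Q, B.Nonempty → IsClosed B → Convex ℝ B →
      (∀ g : G, σ g '' B ⊆ B) → B = Q)
    (A : Set V) (hAQ : A ⊆ Q) (hAne : A.Nonempty) (hAclosed : IsClosed A)
    (hAinv : ∀ g : G, σ g '' A ⊆ A) :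
    Q.extremePoints ℝ ⊆ A := by
  have hclosure : closure (convexHull ℝ A) = Q :=
    hirr _ (closure_minimal (convexHull_min hAQ hQconv) hQcomp.isClosed)
      (hAne.mono ((subset_convexHull ℝ A).trans subset_closure)) isClosed_closure
      (convex_convexHull ℝ A).closure
      fun g => (σ g).image_closure_convexHull_subset (hσcont g) (hAinv g)
  exact extremePoints_subset_of_closure_convexHull_eq hQcomp hAclosed hclosure

/-- In an irreducible affine dynamical system `Q`, every nonempty closed invariant
subset `A ⊆ Q` contains all extreme points of `Q`. -/
theorem closed_invariant_subset_contains_extremePoints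
    {G V : Type*} [Group G] [AddCommGroup V] [Module ℝ V] [TopologicalSpace V]
    [IsTopologicalAddGroup V] [ContinuousSMul ℝ V] [LocallyConvexSpace ℝ V]
    [TopologicalSpace.MetrizableSpace V]
    (Q : Set V) (hQcomp : IsCompact Q) (hQconv : Convex ℝ Q)
    (σ : G → V →ᵃ[ℝ] V) (hσcont : ∀ g : G, Continuous (σ g))
    (hσmul : ∀ (g h : G), ∀ v ∈ Q, σ (g * h) v = σ g (σ h v))
    (hQinv : ∀ g : G, σ g '' Q = Q)
    (hirr : ∀ B ⊆ Q, B.Nonempty → IsClosed B → Convex ℝ B →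
      (∀ g : G, σ g '' B ⊆ B) → B = Q)
    (A : Set V) (hAQ : A ⊆ Q) (hAne : A.Nonempty) (hAclosed : IsClosed A)
    (hAinv : ∀ g : G, σ g '' A ⊆ A) :
    Q.extremePoints ℝ ⊆ A :=
  closed_invariant_subset_contains_extremePoints_general Q hQcomp hQconv σ hσcont hirr A hAQ hAne
    hAclosed hAinv
end

section
/- If (Q,G) and (P,G) are irreducible affine dynamical systems, then there is at most one affine G-equivariant continuous map π : Q → P. In particular, the only affine endomorphism of an irreducible affine system is the identity. -/
/-!
Average two affine `G`-maps `π₁ π₂ : Q → P` into `π = midpoint π₁ π₂`. Its image is a nonempty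
closed convex invariant subset of `P`, hence all of `P` by irreducibility, so it contains an
extreme point `π u` of `P` (Krein–Milman). An extreme point is the midpoint of two points of `P`
only if they coincide, so `π₁ u = π₂ u`. The equalizer of `π₁` and `π₂` in `Q` is then a nonempty
closed convex invariant subset of `Q`, hence all of `Q`.
-/

open Set

section AffineSystems

variable {𝕜 ι E F : Type*}

section Affine

variable [Semiring 𝕜] [PartialOrder 𝕜] [AddCommMonoid E] [AddCommMonoid F] [Module 𝕜 E]
  [Module 𝕜 F] {f g : E → F} {s : Set E}

variable (𝕜) in
def IsAffineOn (f : E → F) (s : Set E) : Prop :=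
  ∀ x ∈ s, ∀ y ∈ s, ∀ a b : 𝕜, 0 ≤ a → 0 ≤ b → a + b = 1 → f (a • x + b • y) = a • f x + b • f y

theorem isAffineOn_id : IsAffineOn 𝕜 id s := fun _ _ _ _ _ _ _ _ _ => rfl

theorem IsAffineOn.convex_image (hf : IsAffineOn 𝕜 f s) (hs : Convex 𝕜 s) :
    Convex 𝕜 (f '' s) := by
  rintro - ⟨x, hx, rfl⟩ - ⟨y, hy, rfl⟩ a b ha hb hab
  exact ⟨a • x + b • y, hs hx hy ha hb hab, hf x hx y hy a b ha hb hab⟩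

theorem IsAffineOn.convex_sep_eq (hf : IsAffineOn 𝕜 f s) (hg : IsAffineOn 𝕜 g s)
    (hs : Convex 𝕜 s) : Convex 𝕜 {x ∈ s | f x = g x} := by
  rintro x ⟨hx, hfgx⟩ y ⟨hy, hfgy⟩ a b ha hb hab
  refine ⟨hs hx hy ha hb hab, ?_⟩
  rw [hf x hx y hy a b ha hb hab, hg x hx y hy a b ha hb hab, hfgx, hfgy]

end Affine

theorem IsAffineOn.midpoint [CommRing 𝕜] [PartialOrder 𝕜] [Invertible (2 : 𝕜)] [AddCommGroup E]
    [AddCommGroup F] [Module 𝕜 E] [Module 𝕜 F] {f g : E → F} {s : Set E}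
    (hf : IsAffineOn 𝕜 f s) (hg : IsAffineOn 𝕜 g s) :
    IsAffineOn 𝕜 (fun x => midpoint 𝕜 (f x) (g x)) s := by
  intro x hx y hy a b ha hb hab
  simp only [hf x hx y hy a b ha hb hab, hg x hx y hy a b ha hb hab, midpoint_eq_smul_add]
  module

theorem ContinuousOn.midpoint [Ring 𝕜] [TopologicalSpace 𝕜]
    [Invertible (2 : 𝕜)] [TopologicalSpace E] [AddCommGroup F] [Module 𝕜 F] [TopologicalSpace F]
    [IsTopologicalAddGroup F] [ContinuousSMul 𝕜 F] {f g : E → F} {s : Set E}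
    (hf : ContinuousOn f s) (hg : ContinuousOn g s) :
    ContinuousOn (fun x => midpoint 𝕜 (f x) (g x)) s :=
  hf.lineMap hg continuousOn_const

theorem eq_of_midpoint_mem_extremePoints [Ring 𝕜] [LinearOrder 𝕜] [IsStrictOrderedRing 𝕜]
    [Invertible (2 : 𝕜)] [AddCommGroup E] [Module 𝕜 E] {A : Set E} {x y : E} (hx : x ∈ A)
    (hy : y ∈ A) (h : midpoint 𝕜 x y ∈ A.extremePoints 𝕜) : x = y :=
  (left_eq_midpoint_iff 𝕜).1 ((mem_extremePoints.1 h).2 x hx y hy (midpoint_mem_openSegment x y)).1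

section Equivariant

def EquivariantOn (σ : ι → E → E) (τ : ι → F → F) (f : E → F) (s : Set E) : Prop :=
  ∀ i, ∀ x ∈ s, f (σ i x) = τ i (f x)

variable {σ : ι → E → E} {s : Set E}

theorem equivariantOn_id : EquivariantOn σ σ id s := fun _ _ _ => rfl

theorem EquivariantOn.midpoint [Ring 𝕜] [Invertible (2 : 𝕜)] [AddCommGroup F] [Module 𝕜 F]
    {τ : ι → F →ᵃ[𝕜] F} {f g : E → F} (hf : EquivariantOn σ (fun i => τ i) f s)
    (hg : EquivariantOn σ (fun i => τ i) g s) :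
    EquivariantOn σ (fun i => τ i) (fun x => midpoint 𝕜 (f x) (g x)) s := by
  intro i x hx
  simp only [hf i x hx, hg i x hx, AffineMap.map_midpoint]

end Equivariant

section Irreducible

variable [Semiring 𝕜] [PartialOrder 𝕜] [AddCommMonoid E] [Module 𝕜 E] [TopologicalSpace E]

variable (𝕜) in
def IsAffineIrreducible (σ : ι → E → E) (Q : Set E) : Prop :=
  ∀ B ⊆ Q, B.Nonempty → IsClosed B → Convex 𝕜 B → (∀ i, σ i '' B ⊆ B) → B = Q

variable [AddCommMonoid F] [Module 𝕜 F] [TopologicalSpace F] [T2Space F]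
  {σ : ι → E → E} {τ : ι → F → F} {Q : Set E} {P : Set F}

theorem IsAffineIrreducible.image_eq (hP : IsAffineIrreducible 𝕜 τ P) (hQc : IsCompact Q)
    (hQne : Q.Nonempty) (hQconv : Convex 𝕜 Q) (hσ : ∀ i, MapsTo (σ i) Q Q) {π : E → F}
    (hπc : ContinuousOn π Q) (hπP : MapsTo π Q P) (hπa : IsAffineOn 𝕜 π Q)
    (hπe : EquivariantOn σ τ π Q) : π '' Q = P := by
  refine hP _ hπP.image_subset (hQne.image π) (hQc.image_of_continuousOn hπc).isClosed
    (hπa.convex_image hQconv) fun i => ?_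
  rintro - ⟨-, ⟨x, hx, rfl⟩, rfl⟩
  exact ⟨σ i x, hσ i hx, hπe i x hx⟩

theorem IsAffineIrreducible.eqOn_of_eq (hQ : IsAffineIrreducible 𝕜 σ Q) (hQc : IsClosed Q)
    (hQconv : Convex 𝕜 Q) (hσ : ∀ i, MapsTo (σ i) Q Q) {π₁ π₂ : E → F}
    (hc₁ : ContinuousOn π₁ Q) (ha₁ : IsAffineOn 𝕜 π₁ Q) (he₁ : EquivariantOn σ τ π₁ Q)
    (hc₂ : ContinuousOn π₂ Q) (ha₂ : IsAffineOn 𝕜 π₂ Q) (he₂ : EquivariantOn σ τ π₂ Q)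
    {u : E} (hu : u ∈ Q) (h : π₁ u = π₂ u) : EqOn π₁ π₂ Q := by
  have hinv : ∀ i, σ i '' {x ∈ Q | π₁ x = π₂ x} ⊆ {x ∈ Q | π₁ x = π₂ x} := by
    rintro i - ⟨x, ⟨hx, hx₁₂⟩, rfl⟩
    exact ⟨hσ i hx, by rw [he₁ i x hx, he₂ i x hx, hx₁₂]⟩
  have hsep := hQ _ (sep_subset _ _) ⟨u, hu, h⟩ (hQc.isClosed_eq hc₁ hc₂)
    (ha₁.convex_sep_eq ha₂ hQconv) hinv
  exact fun x hx => (hsep.ge hx).2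

end Irreducible

theorem IsAffineIrreducible.eqOn_of_equivariantOn [AddCommGroup E] [Module ℝ E] [TopologicalSpace E]
    [T2Space E] [AddCommGroup F] [Module ℝ F] [TopologicalSpace F] [T2Space F]
    [IsTopologicalAddGroup F] [ContinuousSMul ℝ F] [LocallyConvexSpace ℝ F]
    {σ : ι → E → E} {τ : ι → F →ᵃ[ℝ] F} {Q : Set E} {P : Set F}
    (hQ : IsAffineIrreducible ℝ σ Q) (hQc : IsCompact Q) (hQne : Q.Nonempty)
    (hQconv : Convex ℝ Q) (hσ : ∀ i, MapsTo (σ i) Q Q)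
    (hP : IsAffineIrreducible ℝ (fun i => τ i) P) (hPc : IsCompact P) (hPconv : Convex ℝ P)
    {π₁ π₂ : E → F}
    (hc₁ : ContinuousOn π₁ Q) (hP₁ : MapsTo π₁ Q P) (ha₁ : IsAffineOn ℝ π₁ Q)
    (he₁ : EquivariantOn σ (fun i => τ i) π₁ Q)
    (hc₂ : ContinuousOn π₂ Q) (hP₂ : MapsTo π₂ Q P) (ha₂ : IsAffineOn ℝ π₂ Q)
    (he₂ : EquivariantOn σ (fun i => τ i) π₂ Q) : EqOn π₁ π₂ Q := by
  have hπP : MapsTo (fun x => midpoint ℝ (π₁ x) (π₂ x)) Q P := fun x hx =>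
    hPconv.midpoint_mem (hP₁ hx) (hP₂ hx)
  have himage := hP.image_eq hQc hQne hQconv hσ (hc₁.midpoint hc₂) hπP
    (ha₁.midpoint ha₂) (he₁.midpoint he₂)
  obtain ⟨e, he⟩ := hPc.extremePoints_nonempty (hQne.image _ |>.mono hπP.image_subset)
  obtain ⟨u, hu, rfl⟩ := himage ▸ he.1
  exact hQ.eqOn_of_eq hQc.isClosed hQconv hσ hc₁ ha₁ he₁ hc₂ ha₂ he₂ hu
    (eq_of_midpoint_mem_extremePoints (hP₁ hu) (hP₂ hu) he)

end AffineSystems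

theorem affine_hom_unique_between_irreducible_general
    {G V W : Type*}
    [AddCommGroup V] [Module ℝ V] [TopologicalSpace V] [IsTopologicalAddGroup V]
    [ContinuousSMul ℝ V] [LocallyConvexSpace ℝ V] [TopologicalSpace.MetrizableSpace V]
    [AddCommGroup W] [Module ℝ W] [TopologicalSpace W] [IsTopologicalAddGroup W]
    [ContinuousSMul ℝ W] [LocallyConvexSpace ℝ W] [TopologicalSpace.MetrizableSpace W]
    (Q : Set V) (hQcomp : IsCompact Q) (hQne : Q.Nonempty) (hQconv : Convex ℝ Q)
    (σ : G → V →ᵃ[ℝ] V)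
    (hQinv : ∀ g : G, σ g '' Q = Q)
    (hQirr : ∀ B ⊆ Q, B.Nonempty → IsClosed B → Convex ℝ B →
      (∀ g : G, σ g '' B ⊆ B) → B = Q)
    (P : Set W) (hPcomp : IsCompact P) (hPconv : Convex ℝ P)
    (τ : G → W →ᵃ[ℝ] W)
    (hPirr : ∀ B ⊆ P, B.Nonempty → IsClosed B → Convex ℝ B →
      (∀ g : G, τ g '' B ⊆ B) → B = P) :
    -- at most one affine `G`-map `Q → P`:
    (∀ π₁ π₂ : V → W,
      ContinuousOn π₁ Q → MapsTo π₁ Q P →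
      (∀ (g : G), ∀ v ∈ Q, π₁ (σ g v) = τ g (π₁ v)) →
      (∀ v ∈ Q, ∀ w ∈ Q, ∀ a b : ℝ, 0 ≤ a → 0 ≤ b → a + b = 1 →
        π₁ (a • v + b • w) = a • π₁ v + b • π₁ w) →
      ContinuousOn π₂ Q → MapsTo π₂ Q P →
      (∀ (g : G), ∀ v ∈ Q, π₂ (σ g v) = τ g (π₂ v)) →
      (∀ v ∈ Q, ∀ w ∈ Q, ∀ a b : ℝ, 0 ≤ a → 0 ≤ b → a + b = 1 →
        π₂ (a • v + b • w) = a • π₂ v + b • π₂ w) →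
      ∀ v ∈ Q, π₁ v = π₂ v) ∧
    -- the only affine endomorphism of `Q` is the identity:
    (∀ φ : V → V,
      ContinuousOn φ Q → MapsTo φ Q Q →
      (∀ (g : G), ∀ v ∈ Q, φ (σ g v) = σ g (φ v)) →
      (∀ v ∈ Q, ∀ w ∈ Q, ∀ a b : ℝ, 0 ≤ a → 0 ≤ b → a + b = 1 →
        φ (a • v + b • w) = a • φ v + b • φ w) →
      ∀ v ∈ Q, φ v = v) := by
  have hσ : ∀ g, MapsTo (σ g) Q Q := fun g => mapsTo_iff_image_subset.2 (hQinv g).subset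
  refine ⟨fun π₁ π₂ hc₁ hP₁ he₁ ha₁ hc₂ hP₂ he₂ ha₂ => ?_, fun φ hc hQ he ha => ?_⟩
  · exact IsAffineIrreducible.eqOn_of_equivariantOn (σ := fun g => σ g) hQirr hQcomp hQne hQconv hσ
      hPirr hPcomp hPconv hc₁ hP₁ ha₁ he₁ hc₂ hP₂ ha₂ he₂
  · exact IsAffineIrreducible.eqOn_of_equivariantOn (σ := fun g => σ g) hQirr hQcomp hQne hQconv hσ
      hQirr hQcomp hQconv hc hQ ha he continuousOn_id (mapsTo_id Q) isAffineOn_id equivariantOn_id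

/-- Between two irreducible affine dynamical systems there is at most one affine
`G`-equivariant continuous map; in particular the only affine endomorphism of an
irreducible affine system is the identity. -/
theorem affine_hom_unique_between_irreducible
    {G V W : Type*} [Group G]
    [AddCommGroup V] [Module ℝ V] [TopologicalSpace V] [IsTopologicalAddGroup V]
    [ContinuousSMul ℝ V] [LocallyConvexSpace ℝ V] [TopologicalSpace.MetrizableSpace V]
    [AddCommGroup W] [Module ℝ W] [TopologicalSpace W] [IsTopologicalAddGroup W]
    [ContinuousSMul ℝ W] [LocallyConvexSpace ℝ W] [TopologicalSpace.MetrizableSpace W]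
    (Q : Set V) (hQcomp : IsCompact Q) (hQne : Q.Nonempty) (hQconv : Convex ℝ Q)
    (σ : G → V →ᵃ[ℝ] V) (hσcont : ∀ g : G, Continuous (σ g))
    (hσmul : ∀ (g h : G), ∀ v ∈ Q, σ (g * h) v = σ g (σ h v))
    (hQinv : ∀ g : G, σ g '' Q = Q)
    (hQirr : ∀ B ⊆ Q, B.Nonempty → IsClosed B → Convex ℝ B →
      (∀ g : G, σ g '' B ⊆ B) → B = Q)
    (P : Set W) (hPcomp : IsCompact P) (hPne : P.Nonempty) (hPconv : Convex ℝ P)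
    (τ : G → W →ᵃ[ℝ] W) (hτcont : ∀ g : G, Continuous (τ g))
    (hτmul : ∀ (g h : G), ∀ w ∈ P, τ (g * h) w = τ g (τ h w))
    (hPinv : ∀ g : G, τ g '' P = P)
    (hPirr : ∀ B ⊆ P, B.Nonempty → IsClosed B → Convex ℝ B →
      (∀ g : G, τ g '' B ⊆ B) → B = P) :
    -- at most one affine `G`-map `Q → P`:
    (∀ π₁ π₂ : V → W,
      ContinuousOn π₁ Q → MapsTo π₁ Q P →
      (∀ (g : G), ∀ v ∈ Q, π₁ (σ g v) = τ g (π₁ v)) →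
      (∀ v ∈ Q, ∀ w ∈ Q, ∀ a b : ℝ, 0 ≤ a → 0 ≤ b → a + b = 1 →
        π₁ (a • v + b • w) = a • π₁ v + b • π₁ w) →
      ContinuousOn π₂ Q → MapsTo π₂ Q P →
      (∀ (g : G), ∀ v ∈ Q, π₂ (σ g v) = τ g (π₂ v)) →
      (∀ v ∈ Q, ∀ w ∈ Q, ∀ a b : ℝ, 0 ≤ a → 0 ≤ b → a + b = 1 →
        π₂ (a • v + b • w) = a • π₂ v + b • π₂ w) →
      ∀ v ∈ Q, π₁ v = π₂ v) ∧
    -- the only affine endomorphism of `Q` is the identity: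
    (∀ φ : V → V,
      ContinuousOn φ Q → MapsTo φ Q Q →
      (∀ (g : G), ∀ v ∈ Q, φ (σ g v) = σ g (φ v)) →
      (∀ v ∈ Q, ∀ w ∈ Q, ∀ a b : ℝ, 0 ≤ a → 0 ≤ b → a + b = 1 →
        φ (a • v + b • w) = a • φ v + b • φ w) →
      ∀ v ∈ Q, φ v = v) :=
  affine_hom_unique_between_irreducible_general Q hQcomp hQne hQconv σ hQinv hQirr P hPcomp hPconv τ
    hPirr
end

section
/- The rotation system (ℤ/p, T) with Tx = x+1 is affinely prime over ℝ (i.e., has the LSW property for real-valued functions) if and only if p ∈ {2,3}, for p prime. -/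
/-!
The span of the translates of `f` together with `1` is the smallest translation-invariant
subspace containing `f` and the constants. For `p = 2` the nonconstant `f` and `1` are already
independent. For `p = 3`, `f ∘ T = a f + b` would make the successive differences of `f` equal to
`d, a d, a² d`, which sum to zero around the cycle, forcing `d = 0` since `1 + a + a² > 0`; so
`1, f, f ∘ T` are independent. For `p ≥ 4`, `x ↦ cos (2πx/p)` is nonconstant, but all of its
translates lie in the span of `cos (2πx/p)`, `sin (2πx/p)` and `1`, of dimension `3 < p`.
-/

open Submodule ZMod

noncomputable def translatesSpan {p : ℕ} (f : ZMod p → ℝ) : Submodule ℝ (ZMod p → ℝ) :=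
  span ℝ ((Set.range fun n : ℤ => fun x : ZMod p => f (x + (n : ZMod p))) ∪
    {fun _ : ZMod p => (1 : ℝ)})

section translatesSpan

variable {p : ℕ} (f : ZMod p → ℝ)

lemma translate_mem_translatesSpan (n : ℤ) :
    (fun x => f (x + (n : ZMod p))) ∈ translatesSpan f :=
  subset_span (Or.inl ⟨n, rfl⟩)

lemma mem_translatesSpan_self : f ∈ translatesSpan f := by
  simpa using translate_mem_translatesSpan f 0

lemma one_mem_translatesSpan : (fun _ => 1 : ZMod p → ℝ) ∈ translatesSpan f :=
  subset_span (Or.inr rfl)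

end translatesSpan

lemma Submodule.eq_top_of_linearIndependent_of_forall_mem {K V ι : Type*} [DivisionRing K]
    [AddCommGroup V] [Module K V] [FiniteDimensional K V] [Fintype ι] {W : Submodule K V}
    {v : ι → V} (hv : LinearIndependent K v) (hcard : Fintype.card ι = Module.finrank K V)
    (hW : ∀ i, v i ∈ W) : W = ⊤ :=
  eq_top_iff.2 <| hv.span_eq_top_of_card_eq_finrank' hcard ▸ span_le.2 (Set.range_subset_iff.2 hW)

lemma linearIndependent_one_of_not_const {K X : Type*} [Field K] {f : X → K}
    (hf : ¬∃ c, ∀ x, f x = c) : LinearIndependent K ![fun _ => 1, f] := by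
  have : Nonempty X := by
    by_contra hX
    exact hf ⟨0, fun x => (hX ⟨x⟩).elim⟩
  exact (LinearIndependent.pair_iff' (Function.ne_iff.2 ⟨Classical.arbitrary X, one_ne_zero⟩)).2
    fun c hc => hf ⟨c, fun x => by simp [← hc]⟩

lemma ZMod.exists_const_of_translate_eq_affine {f : ZMod 3 → ℝ} {a b : ℝ}
    (h : ∀ x, f (x + 1) = a * f x + b) : ∃ c, ∀ x, f x = c := by
  have h0 := h 0
  have h1 := h 1
  have h2 := h 2
  simp only [zero_add, show (1 + 1 : ZMod 3) = 2 from rfl, show (2 + 1 : ZMod 3) = 0 from rfl]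
    at h0 h1 h2
  have hd : (f 0 - f 1) * (1 + a + a ^ 2) = 0 := by
    linear_combination -((1 + a) * (h0 - h1) + (h1 - h2))
  have hpos : 1 + a + a ^ 2 ≠ 0 := by nlinarith [sq_nonneg (2 * a + 1)]
  have h01 : f 0 = f 1 := sub_eq_zero.1 ((mul_eq_zero.1 hd).resolve_right hpos)
  refine ⟨f 0, fun x => ?_⟩
  fin_cases x
  · rfl
  · exact h01.symm
  · show f 2 = f 0
    linear_combination h1 - h0 - (a + 1) * h01

lemma translatesSpan_eq_top_of_two {f : ZMod 2 → ℝ} (hf : ¬∃ c, ∀ x, f x = c) :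
    translatesSpan f = ⊤ := by
  refine eq_top_of_linearIndependent_of_forall_mem (linearIndependent_one_of_not_const hf)
    (by simp) fun i => ?_
  fin_cases i
  exacts [one_mem_translatesSpan f, mem_translatesSpan_self f]

lemma translatesSpan_eq_top_of_three {f : ZMod 3 → ℝ} (hf : ¬∃ c, ∀ x, f x = c) :
    translatesSpan f = ⊤ := by
  have hT : (fun x => f (x + 1)) ∉ span ℝ (Set.range ![fun _ => 1, f]) := by
    rw [Matrix.range_cons_cons_empty, mem_span_pair]
    rintro ⟨b, a, hab⟩
    exact hf (ZMod.exists_const_of_translate_eq_affine (a := a) (b := b) fun x => by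
      simp [← congrFun hab x, add_comm])
  refine eq_top_of_linearIndependent_of_forall_mem
    ((linearIndependent_one_of_not_const hf).finCons hT) (by simp) fun i => ?_
  fin_cases i
  exacts [by simpa using translate_mem_translatesSpan f 1, one_mem_translatesSpan f,
    mem_translatesSpan_self f]

lemma Circle.eq_one_of_re_eq_one {z : Circle} (h : (z : ℂ).re = 1) : z = 1 := by
  have him : (z : ℂ).im = 0 := Complex.abs_re_eq_norm.1 (by rw [h, Circle.norm_coe, abs_one])
  ext1
  exact Complex.ext (by simpa using h) (by simpa using him)

section toCircle

variable {N : ℕ} [NeZero N]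

lemma ZMod.re_toCircle_add (x y : ZMod N) :
    (toCircle (x + y) : ℂ).re =
      (toCircle y : ℂ).re * (toCircle x : ℂ).re - (toCircle y : ℂ).im * (toCircle x : ℂ).im := by
  rw [AddChar.map_add_eq_mul, Circle.coe_mul, Complex.mul_re]
  ring

lemma ZMod.re_toCircle_not_const (hN : N ≠ 1) :
    ¬∃ c, ∀ x : ZMod N, (toCircle x : ℂ).re = c := by
  rintro ⟨c, hc⟩
  have h1 : toCircle (1 : ZMod N) = 1 :=
    Circle.eq_one_of_re_eq_one (by rw [hc, ← hc 0]; simp)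
  exact hN (one_eq_zero_iff.1 (injective_toCircle (h1.trans (AddChar.map_zero_eq_one _).symm)))

lemma translatesSpan_re_toCircle_le :
    translatesSpan (fun x : ZMod N => (toCircle x : ℂ).re) ≤
      span ℝ (Set.range ![fun x => (toCircle x : ℂ).re, fun x => (toCircle x : ℂ).im, 1]) := by
  refine span_le.2 (Set.union_subset (Set.range_subset_iff.2 fun n => ?_) ?_)
  · have : (fun x : ZMod N => (toCircle (x + (n : ZMod N)) : ℂ).re) =
        (toCircle (n : ZMod N) : ℂ).re • (fun x => (toCircle x : ℂ).re) -
          (toCircle (n : ZMod N) : ℂ).im • (fun x => (toCircle x : ℂ).im) := by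
      ext x
      simp [re_toCircle_add]
    rw [SetLike.mem_coe, this]
    exact sub_mem (smul_mem _ _ (subset_span ⟨0, rfl⟩)) (smul_mem _ _ (subset_span ⟨1, rfl⟩))
  · exact Set.singleton_subset_iff.2 (subset_span ⟨2, rfl⟩)

end toCircle

lemma exists_not_const_translatesSpan_ne_top {N : ℕ} (hN : 4 ≤ N) :
    ∃ f : ZMod N → ℝ, (¬∃ c, ∀ x, f x = c) ∧ translatesSpan f ≠ ⊤ := by
  have : NeZero N := ⟨by omega⟩
  refine ⟨_, ZMod.re_toCircle_not_const (N := N) (by omega), fun htop => ?_⟩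
  have hle := Submodule.finrank_mono (translatesSpan_re_toCircle_le (N := N))
  rw [htop, finrank_top, Module.finrank_fintype_fun_eq_card, ZMod.card] at hle
  have h3 : N ≤ 3 := (hle.trans (finrank_range_le_card _)).trans_eq (Fintype.card_fin 3)
  omega

/-- The rotation system `(ℤ/p, x ↦ x+1)` has the linear Stone-Weierstrass property
over `ℝ` (i.e. is affinely prime over `ℝ`) iff `p = 2` or `p = 3`, for `p` prime. -/
theorem zmod_rotation_lsw_iff (p : ℕ) (hp : p.Prime) :
    (∀ f : ZMod p → ℝ, (¬ ∃ c : ℝ, ∀ x : ZMod p, f x = c) →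
      Submodule.span ℝ
        ((Set.range fun n : ℤ => fun x : ZMod p => f (x + (n : ZMod p))) ∪
          {fun _ : ZMod p => (1 : ℝ)}) = ⊤) ↔
    p = 2 ∨ p = 3 := by
  refine ⟨fun H => ?_, ?_⟩
  · by_contra! hp23
    have h5 := hp.five_le_of_ne_two_of_ne_three hp23.1 hp23.2
    obtain ⟨f, hf, hne⟩ := exists_not_const_translatesSpan_ne_top (by omega : 4 ≤ p)
    exact hne (H f hf)
  · rintro (rfl | rfl)
    exacts [fun f => translatesSpan_eq_top_of_two, fun f => translatesSpan_eq_top_of_three]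
end

section
/- Let V be a closed G-invariant linear subspace of C(S¹,ℂ), where G is the group of Möbius transformations preserving the unit disk acting on the circle. If V contains a non-constant function, then V contains either all functions e^{inθ} with n ≥ 0, or all functions e^{-inθ} with n ≥ 0 (or both, in which case V = C(S¹,ℂ)). -/
open Topology Set

/-- The coordinate of a point of the circle has `normSq` equal to `1`. -/
lemma circle_normSq (ζ : Circle) : Complex.normSq (ζ : ℂ) = 1 := by
  have := ζ.2
  simp [Submonoid.unitSphere, mem_sphere_zero_iff_norm] at this
  simp [Complex.normSq_eq_norm_sq, this]

lemma moeb_key (a c z : ℂ) :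
    Complex.normSq (a*z + (starRingEnd ℂ) c) - Complex.normSq (c*z + (starRingEnd ℂ) a)
      = (Complex.normSq a - Complex.normSq c) * (Complex.normSq z - 1) := by
  simp [Complex.normSq_apply, Complex.add_re, Complex.add_im, Complex.mul_re, Complex.mul_im]
  ring

lemma moeb_den_ne (a c : ℂ) (h : Complex.normSq a - Complex.normSq c = 1) (ζ : Circle) :
    c * (ζ:ℂ) + (starRingEnd ℂ) a ≠ 0 := by
  intro h0
  have hca : Complex.normSq c = Complex.normSq a := by
    have hc : c * (ζ:ℂ) = -(starRingEnd ℂ) a := by linear_combination h0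
    have h2 := congrArg Complex.normSq hc
    simpa [Complex.normSq_mul, circle_normSq] using h2
  rw [hca] at h
  simp at h

lemma moeb_normSq_eq (a c : ℂ) (h : Complex.normSq a - Complex.normSq c = 1) (ζ : Circle) :
    Complex.normSq (a*(ζ:ℂ) + (starRingEnd ℂ) c)
      = Complex.normSq (c*(ζ:ℂ) + (starRingEnd ℂ) a) := by
  have hkey := moeb_key a c (ζ:ℂ)
  rw [circle_normSq] at hkey
  have h0 : (Complex.normSq a - Complex.normSq c) * ((1:ℝ) - 1) = 0 := by ring
  rw [h0] at hkey
  linarith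

/-- The Möbius transformation `z ↦ (az + c̄)/(cz + ā)` (with `|a|² - |c|² = 1`)
preserving the unit disc, as a continuous self-map of the unit circle. -/
noncomputable def moeb (a c : ℂ) (h : Complex.normSq a - Complex.normSq c = 1) :
    C(Circle, Circle) where
  toFun ζ := ⟨(a*(ζ:ℂ) + (starRingEnd ℂ) c) / (c*(ζ:ℂ) + (starRingEnd ℂ) a), by
    have hden := moeb_den_ne a c h ζ
    have heq := moeb_normSq_eq a c h ζ
    have hnorm : ‖(a*(ζ:ℂ) + (starRingEnd ℂ) c) / (c*(ζ:ℂ) + (starRingEnd ℂ) a)‖ = 1 := by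
      rw [norm_div, show ‖a*(ζ:ℂ) + (starRingEnd ℂ) c‖ = ‖c*(ζ:ℂ) + (starRingEnd ℂ) a‖ by
        rw [Complex.norm_def, Complex.norm_def, heq]]
      exact div_self (norm_ne_zero_iff.mpr hden)
    exact mem_sphere_zero_iff_norm.mpr hnorm⟩
  continuous_toFun := by
    apply Continuous.subtype_mk
    exact Continuous.div (by fun_prop) (by fun_prop) (fun ζ => moeb_den_ne a c h ζ)

/-- The character `ζ ↦ ζⁿ = e^{inθ}` on the circle. -/
noncomputable def charPos (n : ℕ) : C(Circle, ℂ) :=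
  ⟨fun ζ => ((ζ : ℂ))^n, by fun_prop⟩

/-- The character `ζ ↦ ζ⁻ⁿ = e^{-inθ}` on the circle. -/
noncomputable def charNeg (n : ℕ) : C(Circle, ℂ) :=
  ⟨fun ζ => (((ζ⁻¹ : Circle)) : ℂ)^n,
    (continuous_subtype_val.comp (continuous_inv (G := Circle))).pow n⟩

/-!
Rotations `ζ ↦ uζ` are Möbius maps, so `V` is a closed rotation-invariant subspace. Averaging the
rotates of `f ∈ V` against `e^{-inθ}` puts `f̂(n) e^{inθ}` in `V` (computed on `AddCircle 1`,
where `fourierCoeff` lives), and a nonconstant `f` has `f̂(n) ≠ 0` for some `n ≠ 0`.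
Differentiating the Möbius maps `ζ ↦ (ζ + tanh s)/(1 + tanh s · ζ)` at `s = 0` on `ζⁿ⁺¹` shows
`ζⁿ - ζⁿ⁺² ∈ V`, and a rotation by `i` separates the two terms, so one `ζⁿ⁺¹ ∈ V` gives all
`ζᵐ ∈ V`. Negative frequencies are reduced to positive ones by `ζ ↦ ζ⁻¹`, which conjugates the
Möbius group to itself. If `V` contains every character, it contains their dense span.
-/

open Complex MeasureTheory

namespace AddCircle

variable {T : ℝ}

theorem fourier_apply_add (n : ℤ) (x y : AddCircle T) :
    fourier n (x + y) = fourier n x * fourier n y := by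
  simp only [fourier_apply, zsmul_add, toCircle_add, Circle.coe_mul]

variable [Fact (0 < T)]

theorem fourierCoeff_injective :
    Function.Injective fun f : C(AddCircle T, ℂ) => fourierCoeff f := by
  intro f g hfg
  apply ContinuousMap.toLp_injective (p := 2) haarAddCircle (𝕜 := ℂ)
  apply fourierBasis.repr.injective
  ext n
  simp only [fourierBasis_repr, fourierCoeff_toLp]
  exact congrFun hfg n

theorem exists_fourierCoeff_ne_zero_of_ne_const (f : C(AddCircle T, ℂ))
    (hf : ¬ ∃ w : ℂ, ∀ x, f x = w) : ∃ n ≠ 0, fourierCoeff f n ≠ 0 := by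
  by_contra! h
  refine hf ⟨fourierCoeff f 0, fun x => ?_⟩
  have hconst : f = fourierCoeff f 0 • fourier 0 := by
    apply fourierCoeff_injective
    ext n
    dsimp only
    rw [ContinuousMap.coe_smul, fourierCoeff.const_smul, fourierCoeff_fourier]
    rcases eq_or_ne n 0 with rfl | hn
    · simp
    · simp [h n hn, hn]
  rw [DFunLike.congr_fun hconst x]
  simp

theorem fourierCoeff_smul_fourier_mem {W : Submodule ℂ C(AddCircle T, ℂ)}
    (hW : IsClosed (W : Set C(AddCircle T, ℂ)))
    (hWinv : ∀ y : AddCircle T, ∀ f ∈ W, f.comp (ContinuousMap.addRight y) ∈ W)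
    {f : C(AddCircle T, ℂ)} (hf : f ∈ W) (n : ℤ) : fourierCoeff f n • fourier n ∈ W := by
  -- `fourierCoeff f n • fourier n` is the average of the translates `fourier (-n) y • f (· + y)`.
  let Φ : C(AddCircle T × AddCircle T, ℂ) :=
    ⟨fun p => fourier (-n) p.1 * f (p.2 + p.1), by fun_prop⟩
  have hΦ : ∀ y, Φ.curry y = fourier (-n) y • f.comp (ContinuousMap.addRight y) := fun y => rfl
  have hint : Integrable Φ.curry haarAddCircle :=
    Φ.curry.continuous.integrable_of_hasCompactSupport (.of_compactSpace _)
  have hmem : ∫ y, Φ.curry y ∂haarAddCircle ∈ W :=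
    (W.restrictScalars ℝ).convex.integral_mem hW
      (.of_forall fun y => hΦ y ▸ W.smul_mem _ (hWinv y f hf)) hint
  convert hmem using 1
  ext x
  rw [ContinuousMap.integral_apply hint]
  calc fourierCoeff f n * fourier n x
      = fourier n x * ∫ y, fourier (-n) (x + y) * f (x + y) ∂haarAddCircle := by
        rw [integral_add_left_eq_self (fun y => fourier (-n) y * f y), fourierCoeff]
        simp only [smul_eq_mul, mul_comm]
    _ = ∫ y, fourier (-n) y * f (x + y) ∂haarAddCircle := by
        rw [← integral_const_mul]
        congr 1 with y
        rw [fourier_apply_add]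
        have : fourier n x * fourier (-n) x = 1 := by rw [← fourier_add]; simp
        linear_combination (fourier (-n) y * f (x + y)) * this

theorem exists_fourier_mem_of_ne_const {W : Submodule ℂ C(AddCircle T, ℂ)}
    (hW : IsClosed (W : Set C(AddCircle T, ℂ)))
    (hWinv : ∀ y : AddCircle T, ∀ f ∈ W, f.comp (ContinuousMap.addRight y) ∈ W)
    {f : C(AddCircle T, ℂ)} (hf : f ∈ W) (hfc : ¬ ∃ w : ℂ, ∀ x, f x = w) :
    ∃ n ≠ 0, fourier n ∈ W := by
  obtain ⟨n, hn, hc⟩ := exists_fourierCoeff_ne_zero_of_ne_const f hfc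
  refine ⟨n, hn, ?_⟩
  simpa only [smul_smul, inv_mul_cancel₀ hc, one_smul] using
    W.smul_mem (fourierCoeff f n)⁻¹ (fourierCoeff_smul_fourier_mem hW hWinv hf n)

theorem eq_top_of_forall_fourier_mem {W : Submodule ℂ C(AddCircle T, ℂ)}
    (hW : IsClosed (W : Set C(AddCircle T, ℂ))) (h : ∀ n, fourier n ∈ W) : W = ⊤ := by
  rw [eq_top_iff, ← span_fourier_closure_eq_top]
  exact Submodule.topologicalClosure_minimal _ (Submodule.span_le.2 (Set.range_subset_iff.2 h)) hW

end AddCircle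

namespace Submodule

variable {X Y : Type*} [TopologicalSpace X] [TopologicalSpace Y]

noncomputable def comapComp (V : Submodule ℂ C(X, ℂ)) (φ : C(X, Y)) : Submodule ℂ C(Y, ℂ) :=
  V.comap (ContinuousMap.compStarAlgHom' ℂ ℂ φ).toLinearMap

@[simp] theorem mem_comapComp {V : Submodule ℂ C(X, ℂ)} {φ : C(X, Y)} {g : C(Y, ℂ)} :
    g ∈ V.comapComp φ ↔ g.comp φ ∈ V :=
  Iff.rfl

theorem isClosed_comapComp {V : Submodule ℂ C(X, ℂ)} (hV : IsClosed (V : Set C(X, ℂ)))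
    (φ : C(X, Y)) : IsClosed (V.comapComp φ : Set C(Y, ℂ)) :=
  hV.preimage (ContinuousMap.compRightContinuousMap ℂ φ).continuous

end Submodule

namespace AddCircle

variable {T : ℝ}

theorem fourier_natCast_comp_homeomorphCircle_symm (hT : T ≠ 0) (n : ℕ) :
    (fourier (n : ℤ)).comp ((homeomorphCircle hT).symm : C(Circle, AddCircle T)) = charPos n := by
  ext ζ
  rw [ContinuousMap.comp_apply, fourier_apply, toCircle_zsmul, ← homeomorphCircle_apply hT]
  simp [charPos]

theorem fourier_neg_natCast_comp_homeomorphCircle_symm (hT : T ≠ 0) (n : ℕ) :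
    (fourier (-(n : ℤ))).comp ((homeomorphCircle hT).symm : C(Circle, AddCircle T)) =
      charNeg n := by
  ext ζ
  rw [ContinuousMap.comp_apply, fourier_apply, toCircle_zsmul, ← homeomorphCircle_apply hT]
  simp [charNeg]

theorem comp_addRight_mem_comapComp_homeomorphCircle_symm (hT : T ≠ 0)
    {V : Submodule ℂ C(Circle, ℂ)}
    (hV : ∀ u : Circle, ∀ f ∈ V, f.comp (ContinuousMap.mulLeft u) ∈ V) (y : AddCircle T)
    {g : C(AddCircle T, ℂ)} (hg : g ∈ V.comapComp (homeomorphCircle hT).symm) :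
    g.comp (ContinuousMap.addRight y) ∈ V.comapComp (homeomorphCircle hT).symm := by
  rw [Submodule.mem_comapComp]
  convert hV (homeomorphCircle hT y) _ hg using 1
  ext ζ
  simp only [ContinuousMap.comp_apply, ContinuousMap.coe_addRight, ContinuousMap.coe_mulLeft,
    ContinuousMap.compStarAlgHom'_apply, AlgHom.toLinearMap_apply, StarAlgHom.coe_toAlgHom]
  congr 1
  apply (homeomorphCircle hT).injective
  simp only [ContinuousMap.coe_mk, Homeomorph.apply_symm_apply]
  rw [homeomorphCircle_apply, toCircle_add, ← homeomorphCircle_apply hT,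
    ← homeomorphCircle_apply hT, Homeomorph.apply_symm_apply, mul_comm]

end AddCircle

open AddCircle in
theorem eq_top_of_forall_charPos_charNeg_mem {V : Submodule ℂ C(Circle, ℂ)}
    (hVc : IsClosed (V : Set C(Circle, ℂ))) (hpos : ∀ n, charPos n ∈ V)
    (hneg : ∀ n, charNeg n ∈ V) : V = ⊤ := by
  let e : AddCircle (1 : ℝ) ≃ₜ Circle := homeomorphCircle one_ne_zero
  have hW : V.comapComp (e.symm : C(Circle, AddCircle (1 : ℝ))) = ⊤ := by
    refine eq_top_of_forall_fourier_mem (V.isClosed_comapComp hVc _) fun n => ?_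
    obtain ⟨k, rfl | rfl⟩ := Int.eq_nat_or_neg n
    · simpa only [e, Submodule.mem_comapComp, fourier_natCast_comp_homeomorphCircle_symm]
        using hpos k
    · simpa only [e, Submodule.mem_comapComp, fourier_neg_natCast_comp_homeomorphCircle_symm]
        using hneg k
  refine eq_top_iff.2 fun g _ => ?_
  have : g.comp e ∈ V.comapComp (e.symm : C(Circle, AddCircle (1 : ℝ))) := hW ▸ Submodule.mem_top
  rw [Submodule.mem_comapComp] at this
  convert this
  ext ζ
  simp [e]

@[simp] lemma coe_moeb (a c : ℂ) (h : normSq a - normSq c = 1) (ζ : Circle) :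
    (moeb a c h ζ : ℂ) = (a * ζ + (starRingEnd ℂ) c) / (c * ζ + (starRingEnd ℂ) a) :=
  rfl

lemma moeb_zero_eq_mulLeft (a : Circle) (h : normSq (a : ℂ) - normSq 0 = 1) :
    moeb a 0 h = ContinuousMap.mulLeft (a * a) := by
  ext ζ
  have : (starRingEnd ℂ) a = (a : ℂ)⁻¹ := (Circle.coe_inv_eq_conj a).symm
  simp only [coe_moeb, map_zero, add_zero, zero_mul, zero_add, this, ContinuousMap.coe_mulLeft,
    Circle.coe_mul]
  field_simp

lemma moeb_inv (a c : ℂ) (h : normSq a - normSq c = 1) (ζ : Circle) :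
    moeb a c h ζ⁻¹ = (moeb ((starRingEnd ℂ) a) ((starRingEnd ℂ) c)
      (by simpa only [normSq_conj] using h) ζ)⁻¹ := by
  ext
  simp only [Circle.coe_inv_eq_conj, coe_moeb, map_div₀, map_add, map_mul, conj_conj]

lemma charPos_comp_inv (n : ℕ) : (charPos n).comp (Homeomorph.inv Circle) = charNeg n := rfl

lemma normSq_cosh_sub_normSq_sinh (s : ℝ) :
    normSq (Real.cosh s : ℂ) - normSq (Real.sinh s : ℂ) = 1 := by
  simp only [normSq_ofReal, ← sq, Real.cosh_sq_sub_sinh_sq]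

/-- The map `ζ ↦ (ζ + tanh s) / (1 + tanh s · ζ)`, parametrised by `s` so that every real `s` is
allowed. -/
noncomputable def moebTanh (s : ℝ) : C(Circle, Circle) :=
  moeb (Real.cosh s) (Real.sinh s) (normSq_cosh_sub_normSq_sinh s)

lemma sinh_mul_add_cosh_ne_zero (s : ℝ) (ζ : Circle) :
    (Real.sinh s : ℂ) * ζ + Real.cosh s ≠ 0 := by
  simpa only [conj_ofReal] using moeb_den_ne _ _ (normSq_cosh_sub_normSq_sinh s) ζ

lemma coe_moebTanh (s : ℝ) (ζ : Circle) :
    (moebTanh s ζ : ℂ) = (Real.cosh s * ζ + Real.sinh s) / (Real.sinh s * ζ + Real.cosh s) := by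
  simp only [moebTanh, coe_moeb, conj_ofReal]

lemma moebTanh_zero (ζ : Circle) : moebTanh 0 ζ = ζ := by
  ext; simp [coe_moebTanh]

lemma continuous_moebTanh_uncurry :
    Continuous fun p : ℝ × Circle => (moebTanh p.1 p.2 : ℂ) := by
  simp_rw [coe_moebTanh]
  exact Continuous.div (by fun_prop) (by fun_prop) fun p => sinh_mul_add_cosh_ne_zero p.1 p.2

lemma coe_moebTanh_sub (s : ℝ) (ζ : Circle) :
    (moebTanh s ζ : ℂ) - ζ =
      Real.sinh s * ((1 - (ζ : ℂ) ^ 2) / (Real.sinh s * ζ + Real.cosh s)) := by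
  rw [coe_moebTanh, mul_div_assoc', div_sub' (sinh_mul_add_cosh_ne_zero s ζ)]
  ring_nf

/-- `((moebTanh s ζ) ^ (n + 1) - ζ ^ (n + 1)) / sinh s`, extended continuously to `s = 0`. -/
noncomputable def moebTanhSlope (n : ℕ) : C(ℝ × Circle, ℂ) where
  toFun p := (1 - (p.2 : ℂ) ^ 2) / (Real.sinh p.1 * p.2 + Real.cosh p.1) *
    ∑ j ∈ Finset.range (n + 1), (moebTanh p.1 p.2 : ℂ) ^ j * (p.2 : ℂ) ^ (n - j)
  continuous_toFun := by
    have := continuous_moebTanh_uncurry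
    refine Continuous.mul ?_ (by fun_prop)
    exact Continuous.div (by fun_prop) (by fun_prop) fun p => sinh_mul_add_cosh_ne_zero p.1 p.2

lemma sinh_mul_moebTanhSlope (n : ℕ) (s : ℝ) (ζ : Circle) :
    Real.sinh s * moebTanhSlope n (s, ζ) = (moebTanh s ζ : ℂ) ^ (n + 1) - (ζ : ℂ) ^ (n + 1) := by
  rw [← geom_sum₂_mul, coe_moebTanh_sub]
  simp only [moebTanhSlope, ContinuousMap.coe_mk, add_tsub_cancel_right]
  ring

lemma moebTanhSlope_zero (n : ℕ) (ζ : Circle) :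
    moebTanhSlope n (0, ζ) = (n + 1) * ((ζ : ℂ) ^ n - (ζ : ℂ) ^ (n + 2)) := by
  have := geom_sum₂_self (ζ : ℂ) (n + 1)
  simp only [add_tsub_cancel_right] at this
  simp only [moebTanhSlope, ContinuousMap.coe_mk, moebTanh_zero, this, Real.sinh_zero,
    Real.cosh_zero]
  push_cast
  ring

def MoebiusInvariant (V : Submodule ℂ C(Circle, ℂ)) : Prop :=
  ∀ (a c : ℂ) (h : normSq a - normSq c = 1), ∀ f ∈ V, f.comp (moeb a c h) ∈ V

namespace MoebiusInvariant

variable {V : Submodule ℂ C(Circle, ℂ)}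

theorem comp_mulLeft_mem (hV : MoebiusInvariant V) (u : Circle) {f : C(Circle, ℂ)}
    (hf : f ∈ V) : f.comp (ContinuousMap.mulLeft u) ∈ V := by
  obtain ⟨a, rfl⟩ : ∃ a : Circle, a * a = u :=
    ⟨Circle.exp ((u : ℂ).arg / 2), by rw [← Circle.exp_add, add_halves, Circle.exp_arg]⟩
  rw [← moeb_zero_eq_mulLeft a (by simp)]
  exact hV _ _ _ f hf

theorem comapComp_inv (hV : MoebiusInvariant V) :
    MoebiusInvariant (V.comapComp (Homeomorph.inv Circle)) := by
  intro a c h f hf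
  have := hV ((starRingEnd ℂ) a) ((starRingEnd ℂ) c) (by simpa only [normSq_conj] using h) _ hf
  rw [Submodule.mem_comapComp]
  convert this using 1
  ext ζ
  simp [moeb_inv]

theorem charPos_sub_charPos_mem (hV : MoebiusInvariant V)
    (hVc : IsClosed (V : Set C(Circle, ℂ))) {n : ℕ} (hn : charPos (n + 1) ∈ V) :
    charPos n - charPos (n + 2) ∈ V := by
  -- `γ s` is the difference quotient of `s ↦ charPos (n + 1) ∘ moebTanh s` at `0`, and the
  -- closed subspace `V` contains its limit `γ 0`, the derivative.
  let γ := (moebTanhSlope n).curry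
  have hγ : ∀ s ≠ 0, γ s ∈ V := fun s hs => by
    have hsinh : (Real.sinh s : ℂ) ≠ 0 := by exact_mod_cast Real.sinh_ne_zero.2 hs
    have : γ s =
        (Real.sinh s : ℂ)⁻¹ • ((charPos (n + 1)).comp (moebTanh s) - charPos (n + 1)) := by
      ext ζ
      simp only [γ, ContinuousMap.curry_apply, ContinuousMap.smul_apply, ContinuousMap.sub_apply,
        ContinuousMap.comp_apply, smul_eq_mul, charPos, ContinuousMap.coe_mk,
        ← sinh_mul_moebTanhSlope, inv_mul_cancel_left₀ hsinh]
    rw [this]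
    exact V.smul_mem _ (V.sub_mem (hV _ _ _ _ hn) hn)
  have hγ0 : γ 0 ∈ V :=
    hVc.mem_of_tendsto (γ.continuous.continuousAt.tendsto.mono_left nhdsWithin_le_nhds)
      (eventually_nhdsWithin_of_forall (s := {0}ᶜ) hγ)
  have : charPos n - charPos (n + 2) = ((n : ℂ) + 1)⁻¹ • γ 0 := by
    ext ζ
    simp only [γ, ContinuousMap.curry_apply, moebTanhSlope_zero, ContinuousMap.smul_apply,
      ContinuousMap.sub_apply, charPos, ContinuousMap.coe_mk, smul_eq_mul,
      inv_mul_cancel_left₀ (Nat.cast_add_one_ne_zero n : (n : ℂ) + 1 ≠ 0)]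
  rw [this]
  exact V.smul_mem _ hγ0

theorem charPos_mem_of_sub_mem (hV : MoebiusInvariant V) {n : ℕ}
    (hn : charPos n - charPos (n + 2) ∈ V) : charPos n ∈ V ∧ charPos (n + 2) ∈ V := by
  have hI : (Circle.exp (Real.pi / 2) : ℂ) = I := by
    rw [Circle.coe_exp]; push_cast; exact exp_pi_div_two_mul_I
  -- Rotating by `i` turns `ζⁿ - ζⁿ⁺²` into `iⁿ (ζⁿ + ζⁿ⁺²)`.
  have hsum : charPos n + charPos (n + 2) ∈ V := by
    have := V.smul_mem (I ^ n)⁻¹ (hV.comp_mulLeft_mem (Circle.exp (Real.pi / 2)) hn)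
    convert this using 1
    ext ζ
    simp only [charPos, ContinuousMap.add_apply, ContinuousMap.smul_apply, ContinuousMap.sub_apply,
      ContinuousMap.comp_apply, ContinuousMap.coe_mulLeft, ContinuousMap.coe_mk, Circle.coe_mul,
      hI, smul_eq_mul, mul_pow, pow_add, I_sq]
    field_simp
    ring
  have half_mem {g : C(Circle, ℂ)} (hg : g + g ∈ V) : g ∈ V := by
    simpa only [← two_smul ℂ, smul_smul, inv_mul_cancel₀ (two_ne_zero : (2 : ℂ) ≠ 0),
      one_smul] using V.smul_mem (2 : ℂ)⁻¹ hg
  exact ⟨half_mem (by simpa only [add_add_sub_cancel] using V.add_mem hsum hn),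
    half_mem (by simpa only [add_sub_sub_cancel] using V.sub_mem hsum hn)⟩

theorem charPos_mem_of_succ_mem (hV : MoebiusInvariant V)
    (hVc : IsClosed (V : Set C(Circle, ℂ))) {n : ℕ} (hn : charPos (n + 1) ∈ V) :
    charPos n ∈ V ∧ charPos (n + 2) ∈ V :=
  hV.charPos_mem_of_sub_mem (hV.charPos_sub_charPos_mem hVc hn)

theorem forall_charPos_mem (hV : MoebiusInvariant V) (hVc : IsClosed (V : Set C(Circle, ℂ)))
    {n : ℕ} (hn : charPos (n + 1) ∈ V) (m : ℕ) : charPos m ∈ V := by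
  have h1 : charPos 1 ∈ V := by
    induction n with
    | zero => exact hn
    | succ k ih => exact ih (hV.charPos_mem_of_succ_mem hVc hn).1
  have hsucc : ∀ k, charPos (k + 1) ∈ V := fun k => by
    induction k with
    | zero => exact h1
    | succ k ih => exact (hV.charPos_mem_of_succ_mem hVc ih).2
  cases m with
  | zero => exact (hV.charPos_mem_of_succ_mem hVc h1).1
  | succ m => exact hsucc m

open AddCircle in
theorem exists_charPos_or_charNeg_mem (hV : MoebiusInvariant V)
    (hVc : IsClosed (V : Set C(Circle, ℂ))) {f : C(Circle, ℂ)} (hf : f ∈ V)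
    (hfc : ¬ ∃ w : ℂ, ∀ ζ, f ζ = w) : ∃ k : ℕ, charPos (k + 1) ∈ V ∨ charNeg (k + 1) ∈ V := by
  let e : AddCircle (1 : ℝ) ≃ₜ Circle := homeomorphCircle one_ne_zero
  have hfe : f.comp e ∈ V.comapComp (e.symm : C(Circle, AddCircle (1 : ℝ))) := by
    rw [Submodule.mem_comapComp]
    convert hf
    ext ζ
    simp [e]
  obtain ⟨n, hn0, hn⟩ := exists_fourier_mem_of_ne_const (V.isClosed_comapComp hVc _)
    (fun y _ hg => comp_addRight_mem_comapComp_homeomorphCircle_symm _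
      (fun u _ => hV.comp_mulLeft_mem u) y hg) hfe
    (fun ⟨w, hw⟩ => hfc ⟨w, fun ζ => by simpa [e] using hw (e.symm ζ)⟩)
  obtain ⟨k, rfl | rfl⟩ := Int.eq_nat_or_neg n <;>
    obtain ⟨k, rfl⟩ := Nat.exists_eq_succ_of_ne_zero (n := k) (by rintro rfl; simp at hn0)
  · exact ⟨k, .inl (by simpa only [e, Submodule.mem_comapComp,
      fourier_natCast_comp_homeomorphCircle_symm] using hn)⟩
  · exact ⟨k, .inr (by simpa only [e, Submodule.mem_comapComp,
      fourier_neg_natCast_comp_homeomorphCircle_symm] using hn)⟩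

end MoebiusInvariant

/-- A closed subspace of `C(S¹,ℂ)` invariant under the Möbius group of the disc and
containing a non-constant function contains all `e^{inθ}, n ≥ 0`, or all
`e^{-inθ}, n ≥ 0`; and if it contains both families it is everything. -/
theorem closed_moebius_invariant_subspace_contains_characters
    (V : Submodule ℂ C(Circle, ℂ)) (hVclosed : IsClosed (V : Set C(Circle, ℂ)))
    (hVinv : ∀ (a c : ℂ) (h : Complex.normSq a - Complex.normSq c = 1),
      ∀ f ∈ V, f.comp (moeb a c h) ∈ V)
    (hVnonconst : ∃ f ∈ V, ¬ ∃ w : ℂ, ∀ ζ : Circle, f ζ = w) :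
    ((∀ n : ℕ, charPos n ∈ V) ∨ (∀ n : ℕ, charNeg n ∈ V)) ∧
    (((∀ n : ℕ, charPos n ∈ V) ∧ (∀ n : ℕ, charNeg n ∈ V)) → V = ⊤) := by
  have hV : MoebiusInvariant V := hVinv
  refine ⟨?_, fun ⟨hpos, hneg⟩ => eq_top_of_forall_charPos_charNeg_mem hVclosed hpos hneg⟩
  obtain ⟨f, hf, hfc⟩ := hVnonconst
  obtain ⟨k, hk | hk⟩ := hV.exists_charPos_or_charNeg_mem hVclosed hf hfc
  · exact .inl (hV.forall_charPos_mem hVclosed hk)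
  · let V' : Submodule ℂ C(Circle, ℂ) := V.comapComp (Homeomorph.inv Circle)
    have hV' : ∀ m, charPos m ∈ V' :=
      hV.comapComp_inv.forall_charPos_mem (V.isClosed_comapComp hVclosed _)
        (by rwa [Submodule.mem_comapComp, charPos_comp_inv])
    exact .inr fun m => by simpa only [V', Submodule.mem_comapComp, charPos_comp_inv] using hV' m
end
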